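/- arXiv:2202.12193 — 4 statements merged into one kernel-verified Lean document; each statement's English description precedes it below -/
import Mathlib

section
/- If f1 and c1 satisfy, for all lists l1, l2: p(l1 ++ l2) = c1((p l1, f1 l1), (p l2, f1 l2)), and f2 and c2 satisfy, for all lists l1, l2: (f1(l1 ++ l2)) = c2(((p l1, f1 l1), f2 l1), ((p l2, f1 l2), f2 l2)), then defining f l = (f1 l, f2 l) and c((a1,(b1,d1)),(a2,(b2,d2))) = (c1((a1,b1),(a2,b2)), c2(((a1,b1),d1),((a2,b2),d2))), we have for all lists l1, l2: (p(l1 ++ l2), f(l1 ++ l2)) = c((p l1, f l1), (p l2, f l2)). -/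
/-- Correctness of the `decomposition` rule for divide-and-conquer synthesis:
if `(f1, c1)` solves the partial lifting problem for `p` and `(f2, c2)` solves the
lifting problem for `f1` (computing the pair `(f1, f2)` on `l1 ++ l2`), then
`f l = (f1 l, f2 l)` together with the assembled combinator `c` solves the
lifting problem for `p`. -/
theorem decomposition_correct {A B C D : Type*}
    (p : List A → B) (f1 : List A → C) (c1 : (B × C) × (B × C) → B)
    (f2 : List A → D) (c2 : ((B × C) × D) × ((B × C) × D) → C × D)
    (h1 : ∀ l1 l2 : List A, p (l1 ++ l2) = c1 ((p l1, f1 l1), (p l2, f1 l2)))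
    (h2 : ∀ l1 l2 : List A,
      (f1 (l1 ++ l2), f2 (l1 ++ l2)) =
        c2 (((p l1, f1 l1), f2 l1), ((p l2, f1 l2), f2 l2))) :
    ∀ l1 l2 : List A,
      (p (l1 ++ l2), (fun l => (f1 l, f2 l)) (l1 ++ l2)) =
        (fun x : (B × (C × D)) × (B × (C × D)) =>
          match x with
          | ((a1, (b1, d1)), (a2, (b2, d2))) =>
            (c1 ((a1, b1), (a2, b2)), c2 (((a1, b1), d1), ((a2, b2), d2))))
          ((p l1, (fun l => (f1 l, f2 l)) l1), (p l2, (fun l => (f1 l, f2 l)) l2)) :=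
  fun l1 l2 => Prod.ext (h1 l1 l2) (h2 l1 l2)
end

section
/- Let E be a finite set of examples, and for each composed program (finite list of lifting functions) f̄, let E|_f̄ ⊆ E be the set of examples satisfied by f̄, where E|_f̄ equals the union of E|_[g] over lifting functions g in f̄. Define f̄ to be 'covered' if there exists f̄' with f̄' ≺ f̄ and E|_f̄ ⊆ E|_f̄'. Suppose ≺ is a strict order on composed programs such that for any f̄ and any partition of its functions into disjoint sublists f̄₁, f̄₂, if f̄₂' ≺ f̄₂ then the program f̄' formed from the functions of f̄₂' together with f̄₁ satisfies f̄' ≺ f̄. Then: if f̄ is uncovered, every sublist f̄'' ⊆ f̄ (containing a subset of the functions of f̄) is uncovered. -/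
theorem Multiset.biUnion_add {F E : Type*} (s : F → Set E) (a b : Multiset F) :
    ⋃ g ∈ a + b, s g = (⋃ g ∈ a, s g) ∪ ⋃ g ∈ b, s g := by
  simp only [Multiset.mem_add, Set.iUnion_or, Set.iUnion_union_distrib]

/-- Pruning lemma for observational covering (abstract form): composed programs are
(multi)sets of lifting functions, satisfaction sets distribute over the component
functions, and the strict order `prec` is monotone under adjoining the same extra
functions to both sides.  Then every sub-program of an uncovered composed program
is uncovered. -/
theorem uncovered_of_subset {F E : Type*}
    (satF : F → Set E) (sat : Multiset F → Set E)
    (hsat : ∀ m : Multiset F, sat m = ⋃ g ∈ m, satF g)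
    (prec : Multiset F → Multiset F → Prop)
    (hmono : ∀ m₁ m₂ m₂' : Multiset F, prec m₂' m₂ → prec (m₂' + m₁) (m₂ + m₁))
    (covered : Multiset F → Prop)
    (hcov : ∀ m, covered m ↔ ∃ m', prec m' m ∧ sat m ⊆ sat m')
    (f : Multiset F) (hf : ¬ covered f) :
    ∀ f'' : Multiset F, f'' ≤ f → ¬ covered f'' := by
  have sat_add : ∀ a b, sat (a + b) = sat a ∪ sat b := by
    intro a b
    simp only [hsat, Multiset.biUnion_add]
  intro f'' hle hcovered
  obtain ⟨d, rfl⟩ := Multiset.le_iff_exists_add.mp hle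
  obtain ⟨m', hprec, hsub⟩ := (hcov f'').mp hcovered
  -- Adjoining the rest `d` of `f` to the cover `m'` of `f''` covers `f = f'' + d`.
  refine hf ((hcov _).mpr ⟨m' + d, hmono d f'' m' hprec, ?_⟩)
  rw [sat_add, sat_add]
  exact Set.union_subset_union_left _ hsub
end

section
/- For the maximum segment sum: for all integer lists l₁, l₂, mss(l₁ ++ l₂) = max(mss l₁, max(mss l₂, mts l₁ + mps l₂)), where mss l is the maximum over all (possibly empty) segments of l of the sum of their elements, mts l is the maximum suffix sum of l, and mps l is the maximum prefix sum of l. -/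
/-- Maximum segment sum: the maximum, over all (possibly empty) segments `s` of `l`
(i.e. `l = u ++ s ++ v`), of `s.sum`.  Segments are enumerated as tails of inits. -/
def mss (l : List ℤ) : ℤ := (((l.inits.flatMap List.tails).map List.sum).foldr max 0)

/-- Maximum prefix sum (the empty prefix is allowed). -/
def mps (l : List ℤ) : ℤ := ((l.inits.map List.sum).foldr max 0)

/-- Maximum tail (suffix) sum (the empty suffix is allowed). -/
def mts (l : List ℤ) : ℤ := ((l.tails.map List.sum).foldr max 0)

/-!
Each of `mss`, `mps`, `mts` is characterised by its upper bounds: `mss l ≤ c` iff every segment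
of `l` has sum at most `c`, and likewise for prefixes and suffixes. A segment of `l₁ ++ l₂` lies
in `l₁`, lies in `l₂`, or is a suffix of `l₁` followed by a prefix of `l₂`; this gives `≤`.
Conversely every such segment is a segment of `l₁ ++ l₂`, which gives `≥`.
-/

namespace List

theorem foldr_max_le_iff {α : Type*} [LinearOrder α] {l : List α} {b c : α} :
    l.foldr max b ≤ c ↔ b ≤ c ∧ ∀ a ∈ l, a ≤ c := by
  induction l with
  | nil => simp
  | cons a l ih => simp only [foldr_cons, max_le_iff, ih, forall_mem_cons]; tauto

theorem foldr_max_map_sum_le_iff {M : Type*} [AddMonoid M] [LinearOrder M]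
    {L : List (List M)} (hL : [] ∈ L) {c : M} :
    (L.map sum).foldr max 0 ≤ c ↔ ∀ s ∈ L, s.sum ≤ c := by
  rw [foldr_max_le_iff, forall_mem_map]
  exact ⟨And.right, fun h => ⟨sum_nil (α := M) ▸ h [] hL, h⟩⟩

theorem mem_flatMap_tails_inits {α : Type*} {s l : List α} :
    s ∈ l.inits.flatMap tails ↔ s <:+: l := by
  simp only [mem_flatMap, mem_inits, mem_tails, infix_iff_suffix_prefix, and_comm]

end List

open List

theorem mss_le_iff {l : List ℤ} {c : ℤ} : mss l ≤ c ↔ ∀ s, s <:+: l → s.sum ≤ c := by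
  simp only [mss, foldr_max_map_sum_le_iff (mem_flatMap_tails_inits.mpr nil_infix),
    mem_flatMap_tails_inits]

theorem mps_le_iff {l : List ℤ} {c : ℤ} : mps l ≤ c ↔ ∀ s, s <+: l → s.sum ≤ c := by
  simp only [mps, foldr_max_map_sum_le_iff ((mem_inits _ _).mpr nil_prefix), mem_inits]

theorem mts_le_iff {l : List ℤ} {c : ℤ} : mts l ≤ c ↔ ∀ s, s <:+ l → s.sum ≤ c := by
  simp only [mts, foldr_max_map_sum_le_iff ((mem_tails _ _).mpr nil_suffix), mem_tails]

theorem sum_le_mss {s l : List ℤ} (h : s <:+: l) : s.sum ≤ mss l :=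
  mss_le_iff.mp le_rfl s h

theorem sum_le_mps {s l : List ℤ} (h : s <+: l) : s.sum ≤ mps l :=
  mps_le_iff.mp le_rfl s h

theorem sum_le_mts {s l : List ℤ} (h : s <:+ l) : s.sum ≤ mts l :=
  mts_le_iff.mp le_rfl s h

theorem mss_mono {l l' : List ℤ} (h : l <:+: l') : mss l ≤ mss l' :=
  mss_le_iff.mpr fun _ hs => sum_le_mss (hs.trans h)

theorem mts_add_mps_le_mss_append (l₁ l₂ : List ℤ) : mts l₁ + mps l₂ ≤ mss (l₁ ++ l₂) := by
  rw [← le_sub_iff_add_le, mts_le_iff]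
  intro t ht
  rw [le_sub_comm, mps_le_iff]
  intro p hp
  rw [le_sub_iff_add_le', ← sum_append]
  exact sum_le_mss (infix_append_iff.mpr (.inr (.inr ⟨t, p, rfl, ht, hp⟩)))

/-- Correctness of the divide-and-conquer combinator for maximum segment sum. -/
theorem mss_append (l₁ l₂ : List ℤ) :
    mss (l₁ ++ l₂) = max (mss l₁) (max (mss l₂) (mts l₁ + mps l₂)) := by
  refine le_antisymm (mss_le_iff.mpr fun s hs => ?_) ?_
  · rcases infix_append_iff.mp hs with h₁ | h₂ | ⟨t, p, rfl, ht, hp⟩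
    · exact le_max_of_le_left (sum_le_mss h₁)
    · exact le_max_of_le_right (le_max_of_le_left (sum_le_mss h₂))
    · rw [sum_append]
      exact le_max_of_le_right (le_max_of_le_right (add_le_add (sum_le_mts ht) (sum_le_mps hp)))
  · exact max_le (mss_mono infix_append_left)
      (max_le (mss_mono infix_append_right) (mts_add_mps_le_mss_append l₁ l₂))
end

section
/- For the 'line of sight' predicate ls, where ls l holds iff the last element of a nonempty list l is greater than or equal to every element of l: for all nonempty integer lists l₁, l₂, ls(l₁ ++ l₂) ↔ (ls l₂ ∧ maximum l₁ ≤ maximum l₂). -/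
namespace List

variable {α : Type*} [LinearOrder α]

theorem maximum_le_coe_iff {l : List α} {a : α} : l.maximum ≤ a ↔ ∀ x ∈ l, x ≤ a :=
  ⟨fun h _ hx => WithBot.coe_le_coe.mp ((le_maximum_of_mem' hx).trans h),
    fun h => maximum_le_of_forall_le fun x hx => WithBot.coe_le_coe.mpr (h x hx)⟩

theorem forall_le_getLast_iff_maximum_eq {l : List α} (h : l ≠ []) :
    (∀ x ∈ l, x ≤ l.getLast h) ↔ l.maximum = l.getLast h := by
  rw [maximum_eq_coe_iff, and_iff_right (getLast_mem h)]

end List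

/-- Combinator identity for the 'line of sight' predicate: for nonempty lists,
the last element of `l₁ ++ l₂` bounds every element iff the last element of `l₂`
bounds every element of `l₂` and the maximum of `l₁` is at most the maximum of
`l₂`. -/
theorem line_of_sight_append (l₁ l₂ : List ℤ) (h₂ : l₂ ≠ []) :
    (∀ x ∈ l₁ ++ l₂, x ≤ (l₁ ++ l₂).getLast (by simp [h₂])) ↔
    ((∀ x ∈ l₂, x ≤ l₂.getLast h₂) ∧ l₁.maximum ≤ l₂.maximum) := by
  rw [List.getLast_append_of_ne_nil (h₂ := h₂), List.forall_mem_append, and_comm]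
  refine and_congr_right fun hls => ?_
  rw [(List.forall_le_getLast_iff_maximum_eq h₂).mp hls, List.maximum_le_coe_iff]
end
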